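/- Let i, j, k be integers with i ≠ 0 and k ≠ 0, and let G be the group presented by generators x, y, t and relators xy = yx, t xⁱ t⁻¹ = xʲyᵏ. Then G has a subgroup H of index 2 which admits a surjective group homomorphism onto the free group F₂ of rank 2. -/

import Mathlib

/-!
Write `i = e n`, `j = e m`, `k = e p` with `gcd (n, m, p) = 1`, and let `F₂ = ⟨a, b⟩`. Sending
`x ↦ (1, a ^ p)`, `y ↦ (a ^ n, a ^ (-m))` and `t ↦ (1, b) τ` defines a homomorphism from `G` to the
wreath product `F₂ ≀ C₂ = (F₂ × F₂) ⋊ C₂`, where `τ` swaps the two factors: the relations hold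
because `p (e n) = n (e p)` and `p (e m) - m (e p) = 0`. The preimage `H` of `F₂ × F₂` has index 2,
and on `H` the first coordinate is a homomorphism to `F₂`. It sends `y, t x t⁻¹, t y t⁻¹, t²` to
`a ^ n, a ^ p, a ^ (-m), b`, and a Bézout relation for `n, m, p` produces `a` from the first three.
-/

/-- Generators `x, y, t`. -/
def x9 : FreeGroup (Fin 3) := FreeGroup.of 0
def y9 : FreeGroup (Fin 3) := FreeGroup.of 1
def t9 : FreeGroup (Fin 3) := FreeGroup.of 2

/-- Relators `xy = yx`, `t xⁱ t⁻¹ = xʲ yᵏ`. -/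
def rels9 (i j k : ℤ) : Set (FreeGroup (Fin 3)) :=
  {x9 * y9 * (y9 * x9)⁻¹, t9 * x9 ^ i * t9⁻¹ * (x9 ^ j * y9 ^ k)⁻¹}

theorem Int.exists_mul_primitive_triple {i : ℤ} (hi : i ≠ 0) (j k : ℤ) :
    ∃ e n m p : ℤ, i = e * n ∧ j = e * m ∧ k = e * p ∧ ∃ α β γ : ℤ, n * α + m * β + p * γ = 1 := by
  set g : ℤ := (Int.gcd j k : ℤ)
  set e : ℤ := (Int.gcd i g : ℤ)
  have he : e ≠ 0 := by simpa [e, Int.gcd_eq_zero_iff] using fun h _ => hi h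
  have hg : g ∣ j ∧ g ∣ k := ⟨Int.gcd_dvd_left j k, Int.gcd_dvd_right j k⟩
  obtain ⟨n, hn⟩ : e ∣ i := Int.gcd_dvd_left i g
  obtain ⟨m, hm⟩ : e ∣ j := (Int.gcd_dvd_right i g).trans hg.1
  obtain ⟨p, hp⟩ : e ∣ k := (Int.gcd_dvd_right i g).trans hg.2
  refine ⟨e, n, m, p, hn, hm, hp, i.gcdA g, i.gcdB g * j.gcdA k, i.gcdB g * j.gcdB k, ?_⟩
  apply mul_left_cancel₀ he
  linear_combination -Int.gcd_eq_gcd_ab i g - i.gcdB g * Int.gcd_eq_gcd_ab j k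
    - i.gcdA g * hn - i.gcdB g * j.gcdA k * hm - i.gcdB g * j.gcdB k * hp

namespace RegularWreathProduct

variable {D Q : Type*} [Group D] [Group Q]

def ofLeft : (Q → D) →* D ≀ᵣ Q where
  toFun f := ⟨f, 1⟩
  map_one' := rfl
  map_mul' _ _ := by ext <;> simp

@[simp]
theorem ofLeft_left (f : Q → D) : (ofLeft f).left = f := rfl

@[simp]
theorem ofLeft_right (f : Q → D) : (ofLeft f).right = 1 := rfl

theorem mk_mul_ofLeft_mul_inv (g : Q → D) (q : Q) (f : Q → D) :
    ⟨g, q⟩ * ofLeft f * (⟨g, q⟩ : D ≀ᵣ Q)⁻¹ = ofLeft (g * (fun x ↦ f (q⁻¹ * x)) * g⁻¹) := by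
  ext x <;> simp

def evalOnKer {G : Type*} [Group G] (Φ : G →* D ≀ᵣ Q) (q : Q) : (rightHom.comp Φ).ker →* D where
  toFun w := (Φ w).left q
  map_one' := by simp
  map_mul' w _ := by
    have hw : (Φ w).right = 1 := w.2
    simp [hw]

theorem mem_range_evalOnKer {G : Type*} [Group G] {Φ : G →* D ≀ᵣ Q} {q : Q} {d : D} (w : G)
    (hw : (Φ w).right = 1) (hd : (Φ w).left q = d) : d ∈ (evalOnKer Φ q).range :=
  ⟨⟨w, hw⟩, hd⟩

end RegularWreathProduct

open RegularWreathProduct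

namespace SelfLoop

def a : FreeGroup (Fin 2) := FreeGroup.of 0
def b : FreeGroup (Fin 2) := FreeGroup.of 1
def τ : Multiplicative (ZMod 2) := Multiplicative.ofAdd 1

theorem eq_one_or_eq_τ (q : Multiplicative (ZMod 2)) : q = 1 ∨ q = τ := by
  revert q; decide

@[simp] theorem one_ne_τ : 1 ≠ τ := by decide
@[simp] theorem τ_inv : τ⁻¹ = τ := by decide
@[simp] theorem τ_mul_τ : τ * τ = 1 := by decide

def wreathImage (n m p : ℤ) : Fin 3 → FreeGroup (Fin 2) ≀ᵣ Multiplicative (ZMod 2) :=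
  ![ofLeft (Pi.mulSingle τ (a ^ p)), ofLeft (Pi.mulSingle 1 (a ^ n) * Pi.mulSingle τ (a ^ (-m))),
    ⟨Pi.mulSingle τ b, τ⟩]

theorem lift_wreathImage_rels (e n m p : ℤ) :
    ∀ r ∈ rels9 (e * n) (e * m) (e * p), FreeGroup.lift (wreathImage n m p) r = 1 := by
  rintro r (rfl | rfl) <;>
  · rw [map_mul, map_inv, mul_inv_eq_one]
    simp only [x9, y9, t9, map_mul, map_inv, map_zpow, FreeGroup.lift_apply_of, wreathImage]
    simp only [Matrix.cons_val, ← map_zpow, ← map_mul, mk_mul_ofLeft_mul_inv]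
    congr 1; funext q
    rcases eq_one_or_eq_τ q with rfl | rfl <;> simp <;> group

variable (e n m p : ℤ)

def toWreath :
    PresentedGroup (rels9 (e * n) (e * m) (e * p)) →* FreeGroup (Fin 2) ≀ᵣ Multiplicative (ZMod 2) :=
  PresentedGroup.toGroup (lift_wreathImage_rels e n m p)

@[simp]
theorem toWreath_of (s : Fin 3) : toWreath e n m p (PresentedGroup.of s) = wreathImage n m p s :=
  PresentedGroup.toGroup.of _

theorem index_ker_rightHom_comp_toWreath : (rightHom.comp (toWreath e n m p)).ker.index = 2 := by
  have hsurj : Function.Surjective (rightHom.comp (toWreath e n m p)) := by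
    intro q
    rcases eq_one_or_eq_τ q with rfl | rfl
    · exact ⟨1, map_one _⟩
    · exact ⟨PresentedGroup.of 2, by simp [wreathImage]⟩
  rw [Subgroup.index_ker, MonoidHom.range_eq_top.2 hsurj, Subgroup.card_top,
    Nat.card_congr Multiplicative.toAdd, Nat.card_zmod]

variable {e n m p}

theorem evalOnKer_toWreath_surjective (hbez : ∃ α β γ : ℤ, n * α + m * β + p * γ = 1) :
    Function.Surjective (evalOnKer (toWreath e n m p) 1) := by
  set R := (evalOnKer (toWreath e n m p) 1).range
  have hy : a ^ n ∈ R := mem_range_evalOnKer (PresentedGroup.of 1)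
    (by simp [wreathImage]) (by simp [wreathImage])
  have htyt : a ^ (-m) ∈ R := mem_range_evalOnKer (PresentedGroup.of 2 * .of 1 * (.of 2)⁻¹)
    (by simp [wreathImage]) (by simp [wreathImage])
  have htxt : a ^ p ∈ R := mem_range_evalOnKer (PresentedGroup.of 2 * .of 0 * (.of 2)⁻¹)
    (by simp [wreathImage]) (by simp [wreathImage])
  have htt : b ∈ R := mem_range_evalOnKer (PresentedGroup.of 2 * .of 2)
    (by simp [wreathImage]) (by simp [wreathImage])
  have ha : a ∈ R := by
    obtain ⟨α, β, γ, h⟩ := hbez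
    have : a = (a ^ n) ^ α * (a ^ (-m)) ^ (-β) * (a ^ p) ^ γ := by
      rw [← zpow_mul, ← zpow_mul, ← zpow_mul, ← zpow_add, ← zpow_add, neg_mul_neg, h, zpow_one]
    rw [this]
    exact mul_mem (mul_mem (zpow_mem hy α) (zpow_mem htyt (-β))) (zpow_mem htxt γ)
  rw [← MonoidHom.range_eq_top, eq_top_iff, ← FreeGroup.closure_range_of, Subgroup.closure_le]
  rintro _ ⟨s, rfl⟩
  fin_cases s
  exacts [ha, htt]

end SelfLoop

theorem self_loop_large_general (i j k : ℤ) (hi : i ≠ 0) :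
    ∃ H : Subgroup (PresentedGroup (rels9 i j k)), H.index = 2 ∧
      ∃ f : H →* FreeGroup (Fin 2), Function.Surjective f := by
  obtain ⟨e, n, m, p, rfl, rfl, rfl, hbez⟩ := Int.exists_mul_primitive_triple hi j k
  exact ⟨_, SelfLoop.index_ker_rightHom_comp_toWreath e n m p, _,
    SelfLoop.evalOnKer_toWreath_surjective hbez⟩

/-- The second part of Proposition 4.1: the single-self-loop tubular group
`⟨x, y, t | [x,y], t xⁱ t⁻¹ = xʲyᵏ⟩` with `k ≠ 0` has an index-2 subgroup surjecting the
free group `F₂`; in particular it is large. -/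
theorem self_loop_large (i j k : ℤ) (hi : i ≠ 0) (hk : k ≠ 0) :
    ∃ H : Subgroup (PresentedGroup (rels9 i j k)), H.index = 2 ∧
      ∃ f : H →* FreeGroup (Fin 2), Function.Surjective f :=
  self_loop_large_general i j k hi
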